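/- For permutations σ < π in the classical permutation pattern order, with σ of length m and π of length n, μ(σ,π) = (−1)^{n−m} · E(σ,π) + Σ_{λ : σ ≤ λ < π} μ(σ,λ) · μ(0̂,1̂), where the second factor in each summand is the Möbius function of the bounded poset Â*(λ,π), and the sum is over all permutations λ with σ ≤ λ ≤ π and λ ≠ π. -/

import Mathlib

attribute [local instance] Classical.propDecidable

noncomputable instance {α : Type*} [Fintype α] : Fintype (WithBot α) :=
  inferInstanceAs (Fintype (Option α))
noncomputable instance {α : Type*} [Fintype α] : Fintype (WithTop α) :=
  inferInstanceAs (Fintype (Option α))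

/-- The Möbius function of a finite partial order. -/
noncomputable def mob {α : Type*} [Preorder α] [Fintype α] (a b : α) : ℤ :=
  letI := Classical.decEq α
  letI : @DecidableRel α α (· ≤ ·) := Classical.decRel _
  letI : @DecidableRel α α (· < ·) := Classical.decRel _
  letI : LocallyFiniteOrder α := Fintype.toLocallyFiniteOrder
  IncidenceAlgebra.mu ℤ a b

/-- The bounded poset obtained by adjoining a new minimum `0̂` and maximum `1̂`. -/
abbrev Bd (α : Type*) := WithBot (WithTop α)

/-- The Möbius number `μ(0̂,1̂)` of a finite poset with a new minimum and maximum adjoined. -/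
noncomputable def mobHat (α : Type*) [Preorder α] [Fintype α] : ℤ :=
  mob (⊥ : Bd α) ⊤

/-- Classical pattern containment for (reduced) permutations. -/
def PermLE {m n : ℕ} (σ : Equiv.Perm (Fin m)) (π : Equiv.Perm (Fin n)) : Prop :=
  ∃ f : Fin m → Fin n, StrictMono f ∧ ∀ i j : Fin m, σ i < σ j ↔ π (f i) < π (f j)

/-- Strict classical pattern containment. -/
def PermLT {m n : ℕ} (σ : Equiv.Perm (Fin m)) (π : Equiv.Perm (Fin n)) : Prop :=
  PermLE σ π ∧ ¬ PermLE π σ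

/-- `red π S` is the permutation of length `S.card` order-isomorphic to `π`
restricted to the set of positions `S`. -/
noncomputable def red {n : ℕ} (π : Equiv.Perm (Fin n)) (S : Finset (Fin n)) :
    Equiv.Perm (Fin S.card) := by
  classical
  have hcard : (S.image fun x => π x).card = S.card :=
    Finset.card_image_of_injective _ π.injective
  refine Equiv.ofBijective (fun i =>
    ((S.image fun x => π x).orderIsoOfFin hcard).symm
      ⟨π (S.orderIsoOfFin rfl i), Finset.mem_image_of_mem _ (S.orderIsoOfFin rfl i).2⟩)
    (Finite.injective_iff_bijective.mp ?_)
  intro i j hij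
  have h2 := congrArg (fun z => ((((S.image fun x => π x).orderIsoOfFin hcard) z : Fin n)))
    hij
  simp only [OrderIso.apply_symm_apply] at h2
  have h4 := π.injective h2
  have h5 : (S.orderIsoOfFin rfl) i = (S.orderIsoOfFin rfl) j := Subtype.ext h4
  exact (S.orderIsoOfFin rfl).injective h5

/-- `S` is an embedding (occurrence set) of `σ` in `π`, i.e. `red(π|_S) = σ`. -/
def IsEmb {n m : ℕ} (π : Equiv.Perm (Fin n)) (S : Finset (Fin n))
    (σ : Equiv.Perm (Fin m)) : Prop :=
  ∃ h : S.card = m, ∀ i : Fin S.card, (red π S i : ℕ) = (σ (Fin.cast h i) : ℕ)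

/-- `E(σ,π)`: the number of embeddings of `σ` in `π`. -/
noncomputable def permE {m n : ℕ} (σ : Equiv.Perm (Fin m)) (π : Equiv.Perm (Fin n)) : ℕ :=
  (Finset.univ.filter fun S : Finset (Fin n) => IsEmb π S σ).card

/-- The poset `A*(λ,π)` of proper position sets `S ⊊ Fin n` with `λ ≤ red(π|_S)`,
ordered by inclusion. -/
abbrev AstarP {n k : ℕ} (π : Equiv.Perm (Fin n)) (lam : Equiv.Perm (Fin k)) :=
  {S : Finset (Fin n) // S ≠ Finset.univ ∧ PermLE lam (red π S)}

/-- The predecessor position. -/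
def predPos {n : ℕ} (p : Fin n) : Fin n :=
  ⟨p.1 - 1, lt_of_le_of_lt (Nat.sub_le p.1 1) p.2⟩

/-- `p` lies in the tail of an adjacency of `π`: `p` is not the first position and the
values of `π` at `p−1` and `p` differ by exactly one (consecutive positions in a maximal
block on which the values increase by exactly 1 at each step or decrease by exactly 1 at
each step). -/
def tailPos {n : ℕ} (π : Equiv.Perm (Fin n)) (p : Fin n) : Prop :=
  0 < p.1 ∧ ((π p : ℕ) = (π (predPos p) : ℕ) + 1 ∨ (π (predPos p) : ℕ) = (π p : ℕ) + 1)

/-- A normal embedding: an embedding containing every position in the tail of an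
adjacency of `π`. -/
def IsNormalEmb {n m : ℕ} (π : Equiv.Perm (Fin n)) (S : Finset (Fin n))
    (σ : Equiv.Perm (Fin m)) : Prop :=
  IsEmb π S σ ∧ ∀ p : Fin n, tailPos π p → p ∈ S

/-- `NE(σ,π)`: the number of normal embeddings of `σ` in `π`. -/
noncomputable def permNE {m n : ℕ} (σ : Equiv.Perm (Fin m)) (π : Equiv.Perm (Fin n)) : ℕ :=
  (Finset.univ.filter fun S : Finset (Fin n) => IsNormalEmb π S σ).card

/-- A set of positions is representative if within every adjacency of `π` its positions
form a suffix of the adjacency. -/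
def ReprP {n : ℕ} (π : Equiv.Perm (Fin n)) (S : Finset (Fin n)) : Prop :=
  ∀ p : Fin n, tailPos π p → predPos p ∈ S → p ∈ S

/-- The poset `R*(λ,π)` of representative proper position sets `S ⊊ Fin n` with
`λ ≤ red(π|_S)`, ordered by inclusion. -/
abbrev RstarP {n k : ℕ} (π : Equiv.Perm (Fin n)) (lam : Equiv.Perm (Fin k)) :=
  {S : Finset (Fin n) // S ≠ Finset.univ ∧ ReprP π S ∧ PermLE lam (red π S)}

/-!
Write `Φ(σ,ρ) = ∑_{σ ≤ λ ≤ ρ} μ(σ,λ) μ(0̂,1̂ in Â*(λ,ρ))` (`mobAstarSum`) for the sum of the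
theorem with the term `λ = ρ` included. As `A*(ρ,ρ)` is empty that term is `-μ(σ,ρ)`, so the
theorem says `Φ(σ,π) = -(-1)^{n-m} E(σ,π)`.

The part of `Â*(λ,π)` below a position set `S` is isomorphic to `Â*(λ, red(π|_S))`, so the Möbius
recurrence at `1̂` reads `μ̂(A*(λ,π)) = -1 - ∑_{S ⊊ [n], λ ≤ red(π|_S)} μ̂(A*(λ, red(π|_S)))`.
Multiplying by `μ(σ,λ)` and summing over `λ`, the recurrence of `μ` gives
`∑_{S ⊆ [n]} Φ(σ, red(π|_S)) = -[σ = π]`. On the other hand, counting embeddings `T ⊆ S` and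
using `∑_{S ⊇ T} (-1)^{|S|-|T|} = [T = [n]]` gives
`∑_{S ⊆ [n]} (-1)^{|S|-m} E(σ, red(π|_S)) = [σ = π]`. The two families therefore satisfy the
same triangular recurrence, and induction on `n` identifies them.
-/

open Finset

section Patterns

variable {m n k c : ℕ}

lemma perm_eq_of_lt_iff {α β : Equiv.Perm (Fin c)} (h : ∀ i j, α i < α j ↔ β i < β j) :
    α = β := by
  have hmono : StrictMono (β ∘ α.symm) := fun x y hxy => by
    simpa using (h (α.symm x) (α.symm y)).1 (by simpa using hxy)
  refine Equiv.ext fun i => ?_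
  simpa using (congrFun hmono.eq_id (α i)).symm

lemma heq_of_lt_iff {α : Equiv.Perm (Fin c)} {β : Equiv.Perm (Fin m)} (hc : c = m)
    (h : ∀ i j, α i < α j ↔ β (Fin.cast hc i) < β (Fin.cast hc j)) : HEq α β := by
  subst hc
  exact heq_of_eq (perm_eq_of_lt_iff (by simpa using h))

lemma PermLE.refl (σ : Equiv.Perm (Fin m)) : PermLE σ σ :=
  ⟨id, strictMono_id, fun _ _ => Iff.rfl⟩

lemma PermLE.trans {σ : Equiv.Perm (Fin m)} {τ : Equiv.Perm (Fin k)} {π : Equiv.Perm (Fin n)}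
    (h₁ : PermLE σ τ) (h₂ : PermLE τ π) : PermLE σ π := by
  obtain ⟨f, hf, hfc⟩ := h₁
  obtain ⟨g, hg, hgc⟩ := h₂
  exact ⟨g ∘ f, hg.comp hf, fun i j => (hfc i j).trans (hgc _ _)⟩

lemma PermLE.card_le {σ : Equiv.Perm (Fin m)} {π : Equiv.Perm (Fin n)} (h : PermLE σ π) :
    m ≤ n := by
  obtain ⟨f, hf, -⟩ := h
  simpa using Fintype.card_le_of_injective f hf.injective

lemma PermLE.eq {σ ρ : Equiv.Perm (Fin m)} (h : PermLE σ ρ) : σ = ρ := by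
  obtain ⟨f, hf, hfc⟩ := h
  rw [hf.eq_id] at hfc
  exact perm_eq_of_lt_iff hfc

lemma PermLE.antisymm {σ : Equiv.Perm (Fin m)} {π : Equiv.Perm (Fin n)} (h₁ : PermLE σ π)
    (h₂ : PermLE π σ) : m = n ∧ HEq σ π := by
  obtain rfl := le_antisymm h₁.card_le h₂.card_le
  exact ⟨rfl, heq_of_eq h₁.eq⟩

lemma permLE_congr_right {lam : Equiv.Perm (Fin k)} {ρ : Equiv.Perm (Fin c)}
    {ρ' : Equiv.Perm (Fin m)} (hc : c = m) (h : HEq ρ ρ') : PermLE lam ρ ↔ PermLE lam ρ' := by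
  subst hc
  rw [eq_of_heq h]

lemma red_lt_red_iff (π : Equiv.Perm (Fin n)) (S : Finset (Fin n)) (i j : Fin #S) :
    red π S i < red π S j ↔ π (S.orderEmbOfFin rfl i) < π (S.orderEmbOfFin rfl j) := by
  unfold red
  rw [Equiv.ofBijective_apply, Equiv.ofBijective_apply, OrderIso.lt_iff_lt, Subtype.mk_lt_mk,
    coe_orderIsoOfFin_apply, coe_orderIsoOfFin_apply]

lemma red_permLE (π : Equiv.Perm (Fin n)) (S : Finset (Fin n)) : PermLE (red π S) π :=
  ⟨_, (S.orderEmbOfFin rfl).strictMono, red_lt_red_iff π S⟩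

lemma red_heq_of_strictMono {π : Equiv.Perm (Fin n)} {S : Finset (Fin n)}
    {ρ : Equiv.Perm (Fin c)} {f : Fin c → Fin n} (hf : StrictMono f) (hcard : #S = c)
    (hmem : ∀ i, f i ∈ S) (hρ : ∀ i j, ρ i < ρ j ↔ π (f i) < π (f j)) : HEq (red π S) ρ := by
  have hS : f ∘ Fin.cast hcard = S.orderEmbOfFin rfl :=
    orderEmbOfFin_unique rfl (fun i => hmem _) (hf.comp (Fin.cast_strictMono hcard))
  refine heq_of_lt_iff hcard fun i j => ?_
  rw [red_lt_red_iff, hρ, ← hS]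
  rfl

lemma red_univ_heq (π : Equiv.Perm (Fin n)) : HEq (red π univ) π :=
  red_heq_of_strictMono strictMono_id (by simp) (fun _ => mem_univ _) fun _ _ => Iff.rfl

lemma red_map_heq_red_red (π : Equiv.Perm (Fin n)) (S : Finset (Fin n)) (U : Finset (Fin #S)) :
    HEq (red π (U.map (S.orderEmbOfFin rfl).toEmbedding)) (red (red π S) U) :=
  red_heq_of_strictMono ((S.orderEmbOfFin rfl).strictMono.comp (U.orderEmbOfFin rfl).strictMono)
    (by simp) (fun i => mem_map_of_mem _ (U.orderEmbOfFin_mem rfl i))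
    fun i j => (red_lt_red_iff _ U i j).trans (red_lt_red_iff π S _ _)

lemma val_eq_cast_iff_heq {α : Equiv.Perm (Fin c)} {β : Equiv.Perm (Fin m)} (hc : c = m) :
    (∀ i, (α i : ℕ) = β (Fin.cast hc i)) ↔ HEq α β := by
  subst hc
  simp [Equiv.ext_iff, Fin.ext_iff]

lemma isEmb_iff {π : Equiv.Perm (Fin n)} {S : Finset (Fin n)} {σ : Equiv.Perm (Fin m)} :
    IsEmb π S σ ↔ #S = m ∧ HEq (red π S) σ :=
  ⟨fun ⟨hc, h⟩ => ⟨hc, (val_eq_cast_iff_heq hc).1 h⟩,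
    fun ⟨hc, h⟩ => ⟨hc, (val_eq_cast_iff_heq hc).2 h⟩⟩

lemma isEmb_univ_iff {ρ : Equiv.Perm (Fin c)} {σ : Equiv.Perm (Fin m)} :
    IsEmb ρ univ σ ↔ PermLE σ ρ ∧ PermLE ρ σ := by
  rw [isEmb_iff]
  constructor
  · rintro ⟨hc, h⟩
    obtain rfl : c = m := by simpa using hc
    obtain rfl := eq_of_heq ((red_univ_heq ρ).symm.trans h)
    exact ⟨PermLE.refl ρ, PermLE.refl ρ⟩
  · rintro ⟨h₁, h₂⟩
    obtain ⟨rfl, h⟩ := h₂.antisymm h₁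
    exact ⟨by simp, (red_univ_heq ρ).trans h⟩

lemma isEmb_map_iff {π : Equiv.Perm (Fin n)} {S : Finset (Fin n)} {U : Finset (Fin #S)}
    {σ : Equiv.Perm (Fin m)} :
    IsEmb π (U.map (S.orderEmbOfFin rfl).toEmbedding) σ ↔ IsEmb (red π S) U σ := by
  have h := red_map_heq_red_red π S U
  rw [isEmb_iff, isEmb_iff]
  exact and_congr (by rw [card_map]) ⟨h.symm.trans, h.trans⟩

end Patterns

section Mobius

variable {α β : Type*} [PartialOrder α] [Fintype α] [PartialOrder β] [Fintype β]

lemma mob_self (a : α) : mob a a = 1 := by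
  let : LocallyFiniteOrder α := Fintype.toLocallyFiniteOrder
  exact IncidenceAlgebra.mu_self a

lemma mob_eq_neg_sum {a b : α} (hab : a ≠ b) :
    mob a b = -∑ x with a ≤ x ∧ x < b, mob a x := by
  let : LocallyFiniteOrder α := Fintype.toLocallyFiniteOrder
  unfold mob
  rw [IncidenceAlgebra.mu_eq_neg_sum_Ico_of_ne hab]
  congr 1
  refine sum_congr ?_ fun _ _ => rfl
  ext x
  simp

lemma mob_map (f : α ↪o β) {a b : α} (hab : a ≤ b)
    (hsurj : ∀ y, f a ≤ y → y ≤ f b → y ∈ Set.range f) : mob (f a) (f b) = mob a b := by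
  induction b using WellFoundedLT.induction with
  | _ b ih =>
  rcases hab.eq_or_lt with rfl | hlt
  · rw [mob_self, mob_self]
  rw [mob_eq_neg_sum (f.injective.ne hlt.ne), mob_eq_neg_sum hlt.ne, eq_comm]
  congr 1
  refine sum_nbij f ?_ f.injective.injOn ?_ ?_
  · intro x hx
    simp only [mem_filter, mem_univ, true_and] at hx ⊢
    exact ⟨f.le_iff_le.2 hx.1, f.lt_iff_lt.2 hx.2⟩
  · intro y hy
    simp only [coe_filter, mem_univ, true_and, Set.mem_ofPred_eq] at hy
    obtain ⟨x, rfl⟩ := hsurj y hy.1 hy.2.le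
    exact ⟨x, by simpa using hy, rfl⟩
  · intro x hx
    simp only [mem_filter, mem_univ, true_and] at hx
    refine (ih x hx.2 hx.1 fun y h₁ h₂ => hsurj y h₁ (h₂.trans ?_)).symm
    exact f.le_iff_le.2 hx.2.le

lemma sum_bd {P : Type*} [Fintype P] (F : Bd P → ℤ) :
    ∑ x, F x = F ⊥ + F ⊤ + ∑ p : P, F ((p : WithTop P) : Bd P) := by
  rw [show ∑ x, F x = F ⊥ + ∑ y : WithTop P, F y from Fintype.sum_option F,
    show ∑ y : WithTop P, F y = F ⊤ + ∑ p : P, F ((p : WithTop P) : Bd P) from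
      Fintype.sum_option _, add_assoc]

lemma mobHat_eq (P : Type*) [PartialOrder P] [Fintype P] :
    mobHat P = -1 - ∑ p : P, mob (⊥ : Bd P) ((p : WithTop P) : Bd P) := by
  unfold mobHat
  have hlt (p : P) : ((p : WithTop P) : Bd P) < ⊤ := WithBot.coe_lt_coe.2 (WithTop.coe_lt_top p)
  rw [mob_eq_neg_sum (by simp), sum_filter, sum_bd]
  simp [mob_self, hlt]
  ring

lemma mob_bot_coe_eq_mobHat {P Q : Type*} [PartialOrder P] [Fintype P] [PartialOrder Q]
    [Fintype Q] (g : Q ↪o P) (p : P) (hg : ∀ q, q ∈ Set.range g ↔ q < p) :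
    mob (⊥ : Bd P) ((p : WithTop P) : Bd P) = mobHat Q := by
  have hlt (q : Q) : g q < p := (hg _).1 ⟨q, rfl⟩
  let f₀ : WithTop Q ↪o WithTop P := OrderEmbedding.ofMapLEIff
    (fun y => (((y.map g).untopD p : P) : WithTop P)) fun x y => by
      induction x using WithTop.recTopCoe <;> induction y using WithTop.recTopCoe <;>
        simp [(hlt _).le, (hlt _).not_ge]
  have hbot : f₀.withBotMap ⊥ = ⊥ := rfl
  have htop : f₀.withBotMap ⊤ = ((p : WithTop P) : Bd P) := rfl
  have key := mob_map f₀.withBotMap (bot_le : (⊥ : Bd Q) ≤ ⊤) fun y _ hy => by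
    rw [htop] at hy
    induction y using WithBot.recBotCoe with
    | bot => exact ⟨⊥, rfl⟩
    | coe y =>
      induction y using WithTop.recTopCoe with
      | top => simp at hy
      | coe q =>
        rcases (show q ≤ p by simpa using hy).eq_or_lt with rfl | hq
        · exact ⟨⊤, htop⟩
        · obtain ⟨r, rfl⟩ := (hg q).2 hq
          exact ⟨((r : WithTop Q) : Bd Q), rfl⟩
  rwa [hbot, htop] at key

lemma mobHat_of_isEmpty (P : Type*) [PartialOrder P] [Fintype P] [IsEmpty P] : mobHat P = -1 := by
  rw [mobHat_eq, univ_eq_empty, sum_empty, sub_zero]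

end Mobius

section Astar

variable {n k : ℕ}

lemma map_orderEmbOfFin_subset (S : Finset (Fin n)) (U : Finset (Fin #S)) :
    U.map (S.orderEmbOfFin rfl).toEmbedding ⊆ S := by
  have h := map_subset_map (f := (S.orderEmbOfFin rfl).toEmbedding).2 (subset_univ U)
  rwa [map_orderEmbOfFin_univ] at h

lemma map_orderEmbOfFin_ne_univ {S : Finset (Fin n)} (hS : S ≠ univ) (U : Finset (Fin #S)) :
    U.map (S.orderEmbOfFin rfl).toEmbedding ≠ univ := fun h =>
  hS (univ_subset_iff.1 (h ▸ map_orderEmbOfFin_subset S U))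

def astarEmbedding {π : Equiv.Perm (Fin n)} {lam : Equiv.Perm (Fin k)} (S : AstarP π lam) :
    AstarP (red π S.1) lam ↪o AstarP π lam :=
  OrderEmbedding.ofMapLEIff
    (fun U => ⟨U.1.map (S.1.orderEmbOfFin rfl).toEmbedding,
      map_orderEmbOfFin_ne_univ S.2.1 U.1,
      (permLE_congr_right (card_map _) (red_map_heq_red_red π S.1 U.1)).2 U.2.2⟩)
    fun _ _ => map_subset_map

lemma mem_range_astarEmbedding_iff {π : Equiv.Perm (Fin n)} {lam : Equiv.Perm (Fin k)}
    (S T : AstarP π lam) :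
    T ∈ Set.range (astarEmbedding S) ↔ T < S := by
  constructor
  · rintro ⟨U, rfl⟩
    show U.1.map _ ⊂ S.1
    conv_rhs => rw [← map_orderEmbOfFin_univ S.1 rfl]
    exact map_ssubset_map.2 (ssubset_univ_iff.2 U.2.1)
  · intro hTS
    obtain ⟨U, -, hU⟩ : ∃ U ⊆ univ, T.1 = U.map (S.1.orderEmbOfFin rfl).toEmbedding :=
      subset_map_iff.1 ((map_orderEmbOfFin_univ S.1 rfl).symm ▸ hTS.le)
    refine ⟨⟨U, ?_, ?_⟩, Subtype.ext hU.symm⟩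
    · rintro rfl
      exact hTS.ne (Subtype.ext (by rw [hU, map_orderEmbOfFin_univ]))
    · exact (permLE_congr_right (card_map _) (red_map_heq_red_red π S.1 U)).1 (hU ▸ T.2.2)

lemma mobHat_astarP_eq (π : Equiv.Perm (Fin n)) (lam : Equiv.Perm (Fin k)) :
    mobHat (AstarP π lam) =
      -1 - ∑ S : Finset (Fin n) with S ≠ univ ∧ PermLE lam (red π S),
        mobHat (AstarP (red π S) lam) := by
  rw [mobHat_eq, sum_subtype (p := fun S => S ≠ univ ∧ PermLE lam (red π S)) _
    (fun _ => by simp) fun S => mobHat (AstarP (red π S) lam)]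
  exact congrArg _ (sum_congr rfl fun S _ =>
    mob_bot_coe_eq_mobHat (astarEmbedding S) S (mem_range_astarEmbedding_iff S))

lemma mobHat_astarP_of_le (π : Equiv.Perm (Fin n)) (lam : Equiv.Perm (Fin k)) (h : n ≤ k) :
    mobHat (AstarP π lam) = -1 := by
  have : IsEmpty (AstarP π lam) := ⟨fun S => by
    have h₁ := card_lt_card (ssubset_univ_iff.2 S.2.1)
    have h₂ := S.2.2.card_le
    simp only [card_univ, Fintype.card_fin] at h₁
    omega⟩
  exact mobHat_of_isEmpty _

end Astar

section Embeddings

variable {m n c : ℕ}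

lemma permE_red (σ : Equiv.Perm (Fin m)) (π : Equiv.Perm (Fin n)) (S : Finset (Fin n)) :
    permE σ (red π S) = #{T | T ⊆ S ∧ IsEmb π T σ} := by
  unfold permE
  rw [← card_map (mapEmbedding (S.orderEmbOfFin rfl).toEmbedding).toEmbedding]
  congr 1
  ext T
  simp only [mem_map, mem_filter, mem_univ, true_and, RelEmbedding.coe_toEmbedding,
    mapEmbedding_apply]
  constructor
  · rintro ⟨U, hU, rfl⟩
    exact ⟨map_orderEmbOfFin_subset S U, isEmb_map_iff.2 hU⟩
  · rintro ⟨hTS, hT⟩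
    obtain ⟨U, -, rfl⟩ := subset_map_iff.1 ((map_orderEmbOfFin_univ S rfl).symm ▸ hTS)
    exact ⟨U, isEmb_map_iff.1 hT, rfl⟩

lemma permE_red_univ (σ : Equiv.Perm (Fin m)) (π : Equiv.Perm (Fin n)) :
    permE σ (red π univ) = permE σ π := by
  rw [permE_red]
  simp [permE]

lemma sum_superset_neg_one_pow {α : Type*} [Fintype α] [DecidableEq α] (T : Finset α) :
    ∑ S with T ⊆ S, (-1 : ℤ) ^ (#S - #T) = if T = univ then 1 else 0 := by
  have h := sum_powerset_neg_one_pow_card (x := Tᶜ)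
  simp only [compl_eq_empty_iff] at h
  convert h using 1
  refine sum_nbij' (· \ T) (T ∪ ·) (fun _ _ => by simp) (fun _ _ => by simp) ?_ ?_ ?_
  · intro S hS
    exact union_sdiff_of_subset (mem_filter.1 hS).2
  · intro U hU
    exact union_sdiff_cancel_left (disjoint_left.2 fun a haT haU => by
      simpa [haT] using mem_powerset.1 hU haU)
  · intro S hS
    rw [card_sdiff_of_subset (mem_filter.1 hS).2]

lemma sum_neg_one_pow_permE_red (σ : Equiv.Perm (Fin m)) (ρ : Equiv.Perm (Fin c)) :
    ∑ S : Finset (Fin c), (-1 : ℤ) ^ (#S - m) * permE σ (red ρ S) =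
      if PermLE σ ρ ∧ PermLE ρ σ then 1 else 0 := by
  calc ∑ S : Finset (Fin c), (-1 : ℤ) ^ (#S - m) * permE σ (red ρ S)
      = ∑ S : Finset (Fin c), ∑ T : Finset (Fin c),
          if IsEmb ρ T σ ∧ T ⊆ S then (-1 : ℤ) ^ (#S - #T) else 0 := by
        refine sum_congr rfl fun S _ => ?_
        rw [permE_red, natCast_card_filter, mul_sum]
        refine sum_congr rfl fun T _ => ?_
        by_cases hT : IsEmb ρ T σ
        · simp [hT, isEmb_iff.1 hT |>.1, and_comm]
        · simp [hT]
    _ = ∑ T : Finset (Fin c), if IsEmb ρ T σ ∧ T = univ then 1 else 0 := by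
        rw [sum_comm]
        refine sum_congr rfl fun T _ => ?_
        by_cases hT : IsEmb ρ T σ
        · simp only [hT, true_and]
          rw [← sum_filter, sum_superset_neg_one_pow]
        · simp [hT]
    _ = if PermLE σ ρ ∧ PermLE ρ σ then 1 else 0 := by
        simp only [← isEmb_univ_iff]
        simp_rw [and_comm (a := IsEmb ρ _ σ), ite_and]
        rw [sum_ite_eq', if_pos (mem_univ _)]

end Embeddings

section PatternSums

variable {m c : ℕ}

lemma sum_perms_eq_single {N : ℕ} (σ : Equiv.Perm (Fin m)) (hm : m ≤ N)
    (f : (k : ℕ) → Equiv.Perm (Fin k) → ℤ)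
    (hf : ∀ k (lam : Equiv.Perm (Fin k)), f k lam ≠ 0 → k = m ∧ HEq lam σ) :
    ∑ k ∈ range (N + 1), ∑ lam : Equiv.Perm (Fin k), f k lam = f m σ := by
  rw [sum_eq_single_of_mem m (mem_range.2 (by omega)), sum_eq_single_of_mem σ (mem_univ _)]
  · intro lam _ hne
    by_contra h
    exact hne (eq_of_heq (hf m lam h).2)
  · intro k _ hk
    refine sum_eq_zero fun lam _ => ?_
    by_contra h
    exact hk (hf k lam h).1

lemma sum_perms_of_le {N : ℕ} (hc : c ≤ N) (f : (k : ℕ) → Equiv.Perm (Fin k) → ℤ)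
    (hf : ∀ k (lam : Equiv.Perm (Fin k)), c < k → f k lam = 0) :
    ∑ k ∈ range (N + 1), ∑ lam : Equiv.Perm (Fin k), f k lam =
      ∑ k ∈ range (c + 1), ∑ lam : Equiv.Perm (Fin k), f k lam := by
  refine (sum_subset (range_subset_range.2 (by omega)) fun k _ hk => ?_).symm
  exact sum_eq_zero fun lam _ => hf k lam (by simpa using hk)

lemma sum_perms_erase (π : Equiv.Perm (Fin c)) (f : (k : ℕ) → Equiv.Perm (Fin k) → ℤ) :
    ∑ k ∈ range (c + 1), ∑ lam : Equiv.Perm (Fin k),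
        (if ¬(k = c ∧ HEq lam π) then f k lam else 0) =
      ∑ k ∈ range (c + 1), ∑ lam : Equiv.Perm (Fin k), f k lam - f c π := by
  have htop := sum_perms_eq_single π le_rfl (fun k lam => if k = c ∧ HEq lam π then f k lam else 0)
    fun k lam h => (ite_ne_right_iff.1 h).1
  simp only [and_self, heq_eq_eq, ite_true] at htop
  rw [← htop, eq_sub_iff_add_eq, ← sum_add_distrib]
  refine sum_congr rfl fun k _ => ?_
  rw [← sum_add_distrib]
  exact sum_congr rfl fun lam _ => by split_ifs <;> simp

variable (mu : ∀ {a b : ℕ}, Equiv.Perm (Fin a) → Equiv.Perm (Fin b) → ℤ)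

lemma sum_mu_interval (hmu_self : ∀ {a : ℕ} (τ : Equiv.Perm (Fin a)), mu τ τ = 1)
    (hmu_rec : ∀ {a b : ℕ} (τ : Equiv.Perm (Fin a)) (ρ : Equiv.Perm (Fin b)),
      PermLT τ ρ →
      ∑ k ∈ Finset.range (b + 1), ∑ lam : Equiv.Perm (Fin k),
        (if PermLE τ lam ∧ PermLE lam ρ then mu τ lam else 0) = 0)
    (σ : Equiv.Perm (Fin m)) (ρ : Equiv.Perm (Fin c)) :
    ∑ k ∈ range (c + 1), ∑ lam : Equiv.Perm (Fin k),
        (if PermLE σ lam ∧ PermLE lam ρ then mu σ lam else 0) =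
      if PermLE σ ρ ∧ PermLE ρ σ then 1 else 0 := by
  by_cases hσρ : PermLE σ ρ
  swap
  · rw [if_neg fun h => hσρ h.1]
    exact sum_eq_zero fun k _ => sum_eq_zero fun lam _ => if_neg fun h => hσρ (h.1.trans h.2)
  by_cases hρσ : PermLE ρ σ
  swap
  · rw [if_neg fun h => hρσ h.2]
    exact hmu_rec σ ρ ⟨hσρ, hρσ⟩
  obtain ⟨rfl, h⟩ := hσρ.antisymm hρσ
  obtain rfl := eq_of_heq h
  rw [if_pos ⟨hσρ, hρσ⟩, sum_perms_eq_single σ le_rfl, if_pos ⟨hσρ, hσρ⟩, hmu_self]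
  intro k lam hne
  obtain ⟨h₁, h₂⟩ := (ite_ne_right_iff.1 hne).1
  exact h₂.antisymm h₁

noncomputable def mobAstarSum (σ : Equiv.Perm (Fin m)) (ρ : Equiv.Perm (Fin c)) : ℤ :=
  ∑ k ∈ range (c + 1), ∑ lam : Equiv.Perm (Fin k),
    if PermLE σ lam ∧ PermLE lam ρ then mu σ lam * mobHat (AstarP ρ lam) else 0

lemma mobAstarSum_add_sum (σ : Equiv.Perm (Fin m)) (ρ : Equiv.Perm (Fin c)) :
    mobAstarSum mu σ ρ + ∑ S : Finset (Fin c) with S ≠ univ, mobAstarSum mu σ (red ρ S) =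
      -∑ k ∈ range (c + 1), ∑ lam : Equiv.Perm (Fin k),
        (if PermLE σ lam ∧ PermLE lam ρ then mu σ lam else 0) := by
  have hterm (k : ℕ) (lam : Equiv.Perm (Fin k)) :
      (if PermLE σ lam ∧ PermLE lam ρ then mu σ lam * mobHat (AstarP ρ lam) else 0) =
        -(if PermLE σ lam ∧ PermLE lam ρ then mu σ lam else 0) -
          ∑ S : Finset (Fin c) with S ≠ univ, (if PermLE σ lam ∧ PermLE lam (red ρ S) then
            mu σ lam * mobHat (AstarP (red ρ S) lam) else 0) := by
    by_cases h : PermLE σ lam ∧ PermLE lam ρ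
    · rw [if_pos h, if_pos h, mobHat_astarP_eq, mul_sub, mul_neg_one, mul_sum, sum_filter,
        sum_filter]
      congr 1
      exact sum_congr rfl fun S _ => by simp [h.1, ite_and]
    · rw [if_neg h, if_neg h, neg_zero, zero_sub, eq_comm, neg_eq_zero]
      exact sum_eq_zero fun S _ => if_neg fun h' => h ⟨h'.1, h'.2.trans (red_permLE ρ S)⟩
  have hS (S : Finset (Fin c)) : ∑ k ∈ range (c + 1), ∑ lam : Equiv.Perm (Fin k),
      (if PermLE σ lam ∧ PermLE lam (red ρ S) then
        mu σ lam * mobHat (AstarP (red ρ S) lam) else 0) =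
      ∑ k ∈ range (#S + 1), ∑ lam : Equiv.Perm (Fin k),
        (if PermLE σ lam ∧ PermLE lam (red ρ S) then
          mu σ lam * mobHat (AstarP (red ρ S) lam) else 0) :=
    sum_perms_of_le (by simpa using card_le_univ S) _ fun k lam hk =>
      if_neg fun h => absurd h.2.card_le (by omega)
  unfold mobAstarSum
  simp only [hterm, sum_sub_distrib, sum_neg_distrib]
  rw [sum_congr rfl fun k _ => sum_comm, sum_comm]
  simp only [hS]
  ring

theorem mobAstarSum_eq (hmu_self : ∀ {a : ℕ} (τ : Equiv.Perm (Fin a)), mu τ τ = 1)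
    (hmu_rec : ∀ {a b : ℕ} (τ : Equiv.Perm (Fin a)) (ρ : Equiv.Perm (Fin b)),
      PermLT τ ρ →
      ∑ k ∈ Finset.range (b + 1), ∑ lam : Equiv.Perm (Fin k),
        (if PermLE τ lam ∧ PermLE lam ρ then mu τ lam else 0) = 0)
    (σ : Equiv.Perm (Fin m)) (ρ : Equiv.Perm (Fin c)) :
    mobAstarSum mu σ ρ = -((-1) ^ (c - m) * permE σ ρ) := by
  induction c using Nat.strong_induction_on with
  | _ c ih =>
  have hrec := mobAstarSum_add_sum mu σ ρ
  rw [sum_mu_interval mu hmu_self hmu_rec] at hrec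
  have hsmaller : ∑ S : Finset (Fin c) with S ≠ univ, mobAstarSum mu σ (red ρ S) =
      -∑ S : Finset (Fin c) with S ≠ univ, (-1) ^ (#S - m) * (permE σ (red ρ S) : ℤ) := by
    rw [← sum_neg_distrib]
    refine sum_congr rfl fun S hS => ih _ ?_ _
    simpa using card_lt_card (ssubset_univ_iff.2 (mem_filter.1 hS).2)
  have halt := sum_neg_one_pow_permE_red σ ρ
  rw [← add_sum_erase _ _ (mem_univ univ), ← filter_ne', permE_red_univ, card_univ,
    Fintype.card_fin] at halt
  linarith

lemma sum_ne_top_eq_mobAstarSum_add (σ : Equiv.Perm (Fin m)) (π : Equiv.Perm (Fin c))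
    (hσπ : PermLE σ π) :
    ∑ k ∈ range (c + 1), ∑ lam : Equiv.Perm (Fin k),
        (if PermLE σ lam ∧ PermLE lam π ∧ ¬(k = c ∧ HEq lam π) then
          mu σ lam * mobHat (AstarP π lam) else 0) =
      mobAstarSum mu σ π + mu σ π := by
  have htop : -mu σ π = if PermLE σ π ∧ PermLE π π then
      mu σ π * mobHat (AstarP π π) else 0 := by
    rw [if_pos ⟨hσπ, PermLE.refl π⟩, mobHat_astarP_of_le π π le_rfl, mul_neg_one]
  rw [← sub_neg_eq_add, htop, mobAstarSum, ← sum_perms_erase π]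
  refine sum_congr rfl fun k _ => sum_congr rfl fun lam _ => ?_
  rw [← ite_and]
  exact if_congr (by tauto) rfl rfl

end PatternSums

/-- For permutations `σ < π` in the classical permutation pattern order,
`μ(σ,π) = (−1)^{n−m} E(σ,π) + ∑_{σ ≤ λ < π} μ(σ,λ) · μ(0̂,1̂ in Â*(λ,π))`.
The Möbius function `mu` of the pattern order is characterised by its defining
recurrence: `mu τ τ = 1` and, for `τ < ρ`, the sum of `mu τ ·` over the interval
`[τ,ρ]` vanishes. -/
theorem stmt2 {m n : ℕ} (σ : Equiv.Perm (Fin m)) (π : Equiv.Perm (Fin n))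
    (mu : ∀ {a b : ℕ}, Equiv.Perm (Fin a) → Equiv.Perm (Fin b) → ℤ)
    (hmu_self : ∀ {a : ℕ} (τ : Equiv.Perm (Fin a)), mu τ τ = 1)
    (hmu_rec : ∀ {a b : ℕ} (τ : Equiv.Perm (Fin a)) (ρ : Equiv.Perm (Fin b)),
      PermLT τ ρ →
      ∑ k ∈ Finset.range (b + 1), ∑ lam : Equiv.Perm (Fin k),
        (if PermLE τ lam ∧ PermLE lam ρ then mu τ lam else 0) = 0)
    (h : PermLT σ π) :
    mu σ π = (-1) ^ (n - m) * (permE σ π : ℤ) +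
      ∑ k ∈ Finset.range (n + 1), ∑ lam : Equiv.Perm (Fin k),
        (if PermLE σ lam ∧ PermLE lam π ∧ ¬(k = n ∧ HEq lam π) then
          mu σ lam * mobHat (AstarP π lam) else 0) := by
  rw [sum_ne_top_eq_mobAstarSum_add mu σ π h.1, mobAstarSum_eq mu hmu_self hmu_rec σ π]
  ring
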